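/- Let n ≥ 2 and let m : ℝⁿ∖{0} → ℝⁿ be even and 0-homogeneous. Let ξ₀ ∈ S^{n−1} and ρ ∈ (0,1) be such that m is C¹, with Lipschitz constant L, on the closed conical neighborhood {ξ ≠ 0 : |ξ/|ξ| − ξ₀| ≤ ρ or |ξ/|ξ| + ξ₀| ≤ ρ}. Then there exists a constant C (depending only on L, ρ) such that for every R > 0, every δ ∈ (0, ρ/(4R)], and every zero-mean trigonometric polynomial θ on 𝕋ⁿ whose nonzero Fourier frequencies k ∈ ℤⁿ all satisfy |δk − ξ₀| < δR or |δk + ξ₀| < δR, one has ‖T[θ] − m(ξ₀)θ‖_{L^∞(𝕋ⁿ)} ≤ C R δ Σ_{k∈ℤⁿ} |θ̂(k)|, where T is the Fourier multiplier with symbol m, i.e. (T[θ])^(k) = m(k)θ̂(k). -/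

import Mathlib

/-! The term of `T[θ] - m(ξ₀)θ` at frequency `k` is `c_k e^{ik·x} (m(k) - m(ξ₀))`. By homogeneity
and evenness `m(k) = m(±δk)`, and `±δk` lies within `δR ≤ ρ/4` of `ξ₀`, hence in the cone where
`m` is `L`-Lipschitz; so `|m(k) - m(ξ₀)| ≤ LδR`, and the triangle inequality gives the bound with
`C = L + 1`. -/

open MeasureTheory Real

noncomputable section

/-- Euclidean space `ℝⁿ`. -/
abbrev E (n : ℕ) := EuclideanSpace ℝ (Fin n)

/-- An integer frequency `k ∈ ℤⁿ` viewed as a vector of `ℝⁿ`. -/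
def intVec {n : ℕ} (k : Fin n → ℤ) : E n := WithLp.toLp 2 (fun i => (k i : ℝ))

/-- Build a vector of `ℂⁿ` from coordinates. -/
def toEC {n : ℕ} (f : Fin n → ℂ) : EuclideanSpace ℂ (Fin n) := WithLp.toLp 2 f

/-- The closed conical `ρ`-neighborhood of the line `ℝξ₀`. -/
def coneNbhd {n : ℕ} (ξ₀ : E n) (ρ : ℝ) : Set (E n) :=
  {ξ | ξ ≠ 0 ∧ (‖‖ξ‖⁻¹ • ξ - ξ₀‖ ≤ ρ ∨ ‖‖ξ‖⁻¹ • ξ + ξ₀‖ ≤ ρ)}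

theorem norm_inv_norm_smul_sub_le {V : Type*} [NormedAddCommGroup V] [NormedSpace ℝ V]
    {u : V} (hu : ‖u‖ = 1) (w : V) : ‖‖w‖⁻¹ • w - u‖ ≤ 2 * ‖w - u‖ := by
  have hrescale : ‖‖w‖⁻¹ • w - w‖ ≤ ‖w - u‖ := by
    rcases eq_or_ne w 0 with rfl | hw
    · simp
    have hw' : ‖w‖ ≠ 0 := norm_ne_zero_iff.mpr hw
    have hmul : (‖w‖⁻¹ - 1) * ‖w‖ = 1 - ‖w‖ := by field_simp
    have hsmul : (‖w‖⁻¹ - 1) • w = ‖w‖⁻¹ • w - w := by rw [sub_smul, one_smul]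
    calc ‖‖w‖⁻¹ • w - w‖ = |‖w‖ - ‖u‖| := by
          rw [← hsmul, norm_smul, Real.norm_eq_abs, hu, abs_sub_comm ‖w‖, ← hmul,
            abs_mul, abs_norm]
      _ ≤ ‖w - u‖ := abs_norm_sub_norm_le w u
  calc ‖‖w‖⁻¹ • w - u‖ ≤ ‖‖w‖⁻¹ • w - w‖ + ‖w - u‖ := norm_sub_le_norm_sub_add_norm_sub _ _ _
    _ ≤ 2 * ‖w - u‖ := by linarith

section Symbol

variable {n : ℕ} {ξ₀ : E n} {ρ : ℝ}

theorem mem_coneNbhd_of_norm_sub_lt_one (hξ₀ : ‖ξ₀‖ = 1) {ξ : E n} (h1 : ‖ξ - ξ₀‖ < 1)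
    (hρ : 2 * ‖ξ - ξ₀‖ ≤ ρ) : ξ ∈ coneNbhd ξ₀ ρ := by
  refine ⟨?_, Or.inl ((norm_inv_norm_smul_sub_le hξ₀ ξ).trans hρ)⟩
  rintro rfl
  simp [hξ₀] at h1

theorem LipschitzOnWith.norm_sub_le_of_coneNbhd {L : NNReal} {m : E n → E n}
    (hLip : LipschitzOnWith L m (coneNbhd ξ₀ ρ)) (hξ₀ : ‖ξ₀‖ = 1) {ξ : E n}
    (h1 : ‖ξ - ξ₀‖ < 1) (hρ : 2 * ‖ξ - ξ₀‖ ≤ ρ) : ‖m ξ - m ξ₀‖ ≤ L * ‖ξ - ξ₀‖ := by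
  have hξ₀_mem : ξ₀ ∈ coneNbhd ξ₀ ρ :=
    mem_coneNbhd_of_norm_sub_lt_one hξ₀ (by simp) (by simpa using (mul_nonneg zero_le_two (norm_nonneg _)).trans hρ)
  simpa only [dist_eq_norm] using
    hLip.dist_le_mul ξ (mem_coneNbhd_of_norm_sub_lt_one hξ₀ h1 hρ) ξ₀ hξ₀_mem

theorem norm_symbol_sub_le {L : NNReal} {m : E n → E n} (hξ₀ : ‖ξ₀‖ = 1)
    (heven : ∀ ξ : E n, ξ ≠ 0 → m (-ξ) = m ξ)
    (hhom : ∀ (r : ℝ), 0 < r → ∀ ξ : E n, ξ ≠ 0 → m (r • ξ) = m ξ)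
    (hLip : LipschitzOnWith L m (coneNbhd ξ₀ ρ)) {δ r : ℝ} (hδ : 0 < δ) (hr : r ≤ 1)
    (hrρ : 2 * r ≤ ρ) {v : E n} (hv : ‖δ • v - ξ₀‖ < r ∨ ‖δ • v + ξ₀‖ < r) :
    ‖m v - m ξ₀‖ ≤ L * r := by
  have hv₀ : v ≠ 0 := by
    rintro rfl
    simp only [smul_zero, zero_sub, zero_add, norm_neg, hξ₀, or_self] at hv
    linarith
  rw [← hhom δ hδ v hv₀]
  rcases hv with hv | hv
  · calc ‖m (δ • v) - m ξ₀‖ ≤ L * ‖δ • v - ξ₀‖ :=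
          hLip.norm_sub_le_of_coneNbhd hξ₀ (by linarith) (by linarith)
      _ ≤ L * r := by gcongr
  · have hneg : ‖-(δ • v) - ξ₀‖ = ‖δ • v + ξ₀‖ := by rw [← norm_neg]; congr 1; abel
    rw [← heven _ (smul_ne_zero hδ.ne' hv₀)]
    calc ‖m (-(δ • v)) - m ξ₀‖ ≤ L * ‖-(δ • v) - ξ₀‖ :=
          hLip.norm_sub_le_of_coneNbhd hξ₀ (by linarith) (by linarith)
      _ ≤ L * r := by rw [hneg]; gcongr

end Symbol

theorem norm_toEC_ofReal {n : ℕ} (v : E n) : ‖toEC fun i => ((v i : ℝ) : ℂ)‖ = ‖v‖ := by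
  simp [EuclideanSpace.norm_eq, toEC]

theorem norm_toEC_sum_sub_smul_le {n : ℕ} {ι : Type*} (S : Finset ι) (u : ι → E n) (w : E n)
    (c z : ι → ℂ) (hz : ∀ k ∈ S, ‖z k‖ = 1) :
    ‖(toEC fun i => ∑ k ∈ S, (u k i : ℂ) * c k * z k)
        - (∑ k ∈ S, c k * z k) • toEC fun i => (w i : ℂ)‖
      ≤ ∑ k ∈ S, ‖c k‖ * ‖u k - w‖ := by
  have hdecomp : (toEC fun i => ∑ k ∈ S, (u k i : ℂ) * c k * z k)
        - (∑ k ∈ S, c k * z k) • (toEC fun i => (w i : ℂ))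
      = ∑ k ∈ S, (c k * z k) • toEC fun i => (((u k - w) i : ℝ) : ℂ) := by
    ext i
    simp only [toEC, PiLp.sub_apply, PiLp.smul_apply, WithLp.ofLp_sum, Finset.sum_apply,
      smul_eq_mul, Finset.sum_mul, ← Finset.sum_sub_distrib, Complex.ofReal_sub]
    refine Finset.sum_congr rfl fun k _ => by ring
  rw [hdecomp]
  refine (norm_sum_le _ _).trans (Finset.sum_le_sum fun k hk => ?_)
  rw [norm_smul, norm_mul, hz k hk, mul_one, norm_toEC_ofReal]

theorem norm_exp_I_mul_sum_intCast_mul {n : ℕ} (k : Fin n → ℤ) (x : E n) :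
    ‖Complex.exp (Complex.I * ∑ j, (k j : ℂ) * (x j : ℂ))‖ = 1 := by
  exact_mod_cast Complex.norm_exp_I_mul_ofReal (∑ j, (k j : ℝ) * x j)

/-- If the even, `0`-homogeneous symbol `m` is Lipschitz with constant
`L` on a closed conical `ρ`-neighborhood of `±ξ₀`, then there is `C = C(L,ρ) > 0` such
that for every `R > 0`, `δ ∈ (0, ρ/(4R)]`, and every zero-mean trigonometric polynomial
`θ = Σ_{k∈S} c_k e^{ik·x}` whose frequencies satisfy `|δk - ξ₀| < δR` or `|δk + ξ₀| < δR`,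
one has `‖T[θ] - m(ξ₀)θ‖_{L^∞} ≤ C R δ Σ_k |c_k|`. -/
theorem multiplier_cone_estimate (L : NNReal) (ρ : ℝ) (hρ : ρ ∈ Set.Ioo (0:ℝ) 1) :
    ∃ C : ℝ, 0 < C ∧
      ∀ (n : ℕ), 2 ≤ n → ∀ (m : E n → E n) (ξ₀ : E n),
        ξ₀ ∈ Metric.sphere (0 : E n) 1 →
        (∀ ξ : E n, ξ ≠ 0 → m (-ξ) = m ξ) →
        (∀ (r : ℝ), 0 < r → ∀ ξ : E n, ξ ≠ 0 → m (r • ξ) = m ξ) →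
        LipschitzOnWith L m (coneNbhd ξ₀ ρ) →
        ∀ (R : ℝ), 0 < R → ∀ (δ : ℝ), δ ∈ Set.Ioc (0:ℝ) (ρ / (4 * R)) →
        ∀ (S : Finset (Fin n → ℤ)) (c : (Fin n → ℤ) → ℂ),
          (0 : Fin n → ℤ) ∉ S →
          (∀ k ∈ S, ‖δ • intVec k - ξ₀‖ < δ * R ∨ ‖δ • intVec k + ξ₀‖ < δ * R) →
          ∀ x : E n,
            ‖(toEC fun i => ∑ k ∈ S, (m (intVec k) i : ℂ) * c k *
                  Complex.exp (Complex.I * (∑ j, (k j : ℂ) * (x j : ℂ))))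
              - (∑ k ∈ S, c k *
                  Complex.exp (Complex.I * (∑ j, (k j : ℂ) * (x j : ℂ))))
                • (toEC fun i => (m ξ₀ i : ℂ))‖
            ≤ C * R * δ * ∑ k ∈ S, ‖c k‖ := by
  refine ⟨L + 1, by positivity, ?_⟩
  intro n _ m ξ₀ hsphere heven hhom hLip R hR δ hδ S c _ hfreq x
  have hξ₀ : ‖ξ₀‖ = 1 := mem_sphere_zero_iff_norm.mp hsphere
  have hδR_pos : 0 < δ * R := mul_pos hδ.1 hR
  have hδR : 4 * (δ * R) ≤ ρ := by
    have := (le_div_iff₀ (by positivity)).mp hδ.2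
    linarith
  calc _ ≤ ∑ k ∈ S, ‖c k‖ * ‖m (intVec k) - m ξ₀‖ :=
        norm_toEC_sum_sub_smul_le S _ _ c _ fun k _ => norm_exp_I_mul_sum_intCast_mul k x
    _ ≤ ∑ k ∈ S, ‖c k‖ * (L * (δ * R)) := by
        gcongr with k hk
        exact norm_symbol_sub_le hξ₀ heven hhom hLip hδ.1 (by linarith [hρ.2])
          (by linarith) (hfreq k hk)
    _ ≤ (L + 1) * R * δ * ∑ k ∈ S, ‖c k‖ := by
        rw [← Finset.sum_mul, mul_comm]
        have : (L : ℝ) * (δ * R) ≤ (L + 1) * R * δ := by nlinarith [hδ.1]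
        gcongr
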